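/- arXiv:2507.20874 — 2 statements merged into one kernel-verified Lean document; each statement's English description precedes it below -/
import Mathlib

section
/- Let Ω = ω × (-1/2, 1/2) where ω ⊂ ℝ^{d-1} is a bounded smooth domain, and let h ∈ L²(ω) and v ∈ H¹(Ω). For 0 < ε ≤ 1 define the scaled gradient ∇^ε v = (∂₁v, ..., ∂_{d-1}v, ε^{-1}∂_d v), and define m(v)(x') = ∫_{-1/2}^{1/2} v(x', x_d) dx_d. Then for any z ∈ [-1/2, 1/2], one has |∫_ω (v(·,z) - m(v)) h| ≤ ε ‖h‖_{L²(ω)} ‖∇^ε v‖_{L²(Ω)}. -/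
open MeasureTheory Real

noncomputable section

/-- Partial derivative of `f` in the coordinate direction `i`. -/
def pd {n : ℕ} (f : (Fin n → ℝ) → ℝ) (i : Fin n) (x : Fin n → ℝ) : ℝ :=
  fderiv ℝ f x (Pi.single i 1)

/-- The plate-type domain `ω × (-1/2, 1/2)`. -/
def cyl {d : ℕ} (ω : Set (Fin d → ℝ)) : Set (Fin (d + 1) → ℝ) :=
  {x | (fun i : Fin d => x i.castSucc) ∈ ω ∧ x (Fin.last d) ∈ Set.Ioo (-(1:ℝ)/2) (1/2)}

/-- The open unit cube `(0,1)^d`. -/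
def unitCube (d : ℕ) : Set (Fin d → ℝ) := Set.univ.pi fun _ => Set.Ioo (0:ℝ) 1

/-- The periodicity cell `𝒴 = (0,1)^d × (-1/2,1/2)`. -/
def cellY (d : ℕ) : Set (Fin (d + 1) → ℝ) := cyl (unitCube d)

/-- `f` is 1-periodic in each of the first `d` (horizontal) variables. -/
def XPeriodic {d : ℕ} {β : Type*} (f : (Fin (d + 1) → ℝ) → β) : Prop :=
  ∀ (x : Fin (d + 1) → ℝ) (i : Fin d), f (x + Pi.single i.castSucc 1) = f x

/-- Squared pointwise norm of the scaled gradient `∇^ε v`. -/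
def gradEpsSq {d : ℕ} (ε : ℝ) (v : (Fin (d + 1) → ℝ) → ℝ) (x : Fin (d + 1) → ℝ) : ℝ :=
  (∑ α : Fin d, (pd v α.castSucc x) ^ 2) + ε⁻¹ ^ 2 * (pd v (Fin.last d) x) ^ 2

/-! On each vertical segment `{x'} × (-1/2, 1/2)` the mean value theorem for integrals turns the
average `m(v)(x')` into a point value `v(x', c)`, so the fundamental theorem of calculus and
Cauchy–Schwarz bound `|v(x', z) - m(v)(x')|` by the `L²` norm of `∂_d v` on that segment. A second
Cauchy–Schwarz on `ω`, together with Fubini, bounds the integral by `‖∂_d v‖_{L²(Ω)} ‖h‖_{L²(ω)}`,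
and `|∂_d v| ≤ ε |∇^ε v|` pointwise. -/

section CauchySchwarz

variable {α : Type*} [MeasurableSpace α] {μ : Measure α}

theorem integral_mul_le_sqrt_mul_sqrt_of_nonneg {f g : α → ℝ} (hf0 : 0 ≤ᵐ[μ] f)
    (hg0 : 0 ≤ᵐ[μ] g) (hf : MemLp f 2 μ) (hg : MemLp g 2 μ) :
    ∫ x, f x * g x ∂μ ≤ √(∫ x, f x ^ 2 ∂μ) * √(∫ x, g x ^ 2 ∂μ) := by
  have h := integral_mul_le_Lp_mul_Lq_of_nonneg Real.HolderConjugate.two_two hf0 hg0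
    (by simpa using hf) (by simpa using hg)
  simpa only [Real.rpow_two, Real.sqrt_eq_rpow, one_div] using h

theorem abs_integral_mul_le_sqrt_mul_sqrt {f g F G : α → ℝ} (hF : MemLp F 2 μ)
    (hG : MemLp G 2 μ) (hfF : ∀ᵐ x ∂μ, |f x| ≤ F x) (hgG : ∀ᵐ x ∂μ, |g x| ≤ G x) :
    |∫ x, f x * g x ∂μ| ≤ √(∫ x, F x ^ 2 ∂μ) * √(∫ x, G x ^ 2 ∂μ) := by
  have hF0 : 0 ≤ᵐ[μ] F := hfF.mono fun x hx => (abs_nonneg _).trans hx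
  have hG0 : 0 ≤ᵐ[μ] G := hgG.mono fun x hx => (abs_nonneg _).trans hx
  calc |∫ x, f x * g x ∂μ| ≤ ∫ x, |f x * g x| ∂μ := abs_integral_le_integral_abs
    _ ≤ ∫ x, F x * G x ∂μ := by
        refine integral_mono_of_nonneg (.of_forall fun x => abs_nonneg _) (hF.integrable_mul hG) ?_
        filter_upwards [hfF, hgG] with x hfx hgx
        rw [abs_mul]
        exact mul_le_mul hfx hgx (abs_nonneg _) ((abs_nonneg _).trans hfx)
    _ ≤ _ := integral_mul_le_sqrt_mul_sqrt_of_nonneg hF0 hG0 hF hG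

theorem memLp_two_sqrt {G : α → ℝ} (hG : Integrable G μ) (hG0 : 0 ≤ᵐ[μ] G) :
    MemLp (fun x => √(G x)) 2 μ := by
  refine (memLp_two_iff_integrable_sq
    (Real.continuous_sqrt.comp_aestronglyMeasurable hG.aestronglyMeasurable)).2 ?_
  refine hG.congr ?_
  filter_upwards [hG0] with x hx
  exact (Real.sq_sqrt hx).symm

end CauchySchwarz

section OneDimensional

open Set

variable {w w' : ℝ → ℝ} {a b : ℝ}

theorem abs_sub_le_integral_abs_deriv (hw : ∀ s ∈ Icc a b, HasDerivAt w (w' s) s)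
    (hw' : IntegrableOn w' (Icc a b)) {x y : ℝ} (hx : x ∈ Icc a b) (hy : y ∈ Icc a b) :
    |w y - w x| ≤ ∫ s in Ioo a b, |w' s| := by
  have hsub : uIcc x y ⊆ Icc a b := uIcc_subset_Icc hx hy
  rw [← intervalIntegral.integral_eq_sub_of_hasDerivAt (fun s hs => hw s (hsub hs))
    ((hw'.mono_set hsub).intervalIntegrable)]
  calc |∫ s in x..y, w' s| ≤ ∫ s in uIoc x y, |w' s| := by
        simpa only [Real.norm_eq_abs] using
          intervalIntegral.norm_integral_le_integral_norm_uIoc (f := w') (μ := volume)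
    _ ≤ ∫ s in Ioc a b, |w' s| :=
        setIntegral_mono_set (hw'.mono_set Ioc_subset_Icc_self).norm
          (.of_forall fun _ => abs_nonneg _)
          (Ioc_subset_Ioc (le_min hx.1 hy.1) (max_le hx.2 hy.2)).eventuallyLE
    _ = ∫ s in Ioo a b, |w' s| := integral_Ioc_eq_integral_Ioo

theorem integral_abs_le_sqrt_mul_sqrt_integral_sq (hab : a ≤ b)
    (hw' : MemLp w' 2 (volume.restrict (Ioo a b))) :
    ∫ s in Ioo a b, |w' s| ≤ √(b - a) * √(∫ s in Ioo a b, w' s ^ 2) := by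
  have h := integral_mul_le_sqrt_mul_sqrt_of_nonneg (μ := volume.restrict (Ioo a b))
    (.of_forall fun _ => zero_le_one) (.of_forall fun s => abs_nonneg (w' s))
    (memLp_const 1) hw'.abs
  simpa [sq_abs, Real.volume_Ioo, hab] using h

theorem exists_mem_Ioo_setAverage_eq (hab : a < b) (hw : ContinuousOn w (Icc a b)) :
    ∃ c ∈ Ioo a b, ⨍ t in Ioo a b, w t = w c := by
  have hwi : IntegrableOn w (Ioo a b) := hw.integrableOn_Icc.mono_set Ioo_subset_Icc_self
  obtain ⟨c, hc, hwc⟩ := exists_eq_const_mul_setIntegral_of_nonneg (g := fun _ => (1 : ℝ))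
    (isConnected_Ioo hab) measurableSet_Ioo (hw.mono Ioo_subset_Icc_self)
    (integrableOn_const (μ := volume) (by simp)) (hwi.mul_const 1) (fun _ _ => zero_le_one)
  refine ⟨c, hc, ?_⟩
  simp only [mul_one, integral_const, smul_eq_mul] at hwc
  rw [setAverage_eq, hwc, smul_eq_mul, measureReal_restrict_apply_univ]
  have : volume.real (Ioo a b) ≠ 0 := by
    simp [measureReal_def, Real.volume_Ioo, hab.le, sub_ne_zero.2 hab.ne']
  field_simp

theorem abs_sub_setAverage_le_sqrt_mul_sqrt (hab : a < b)
    (hw : ∀ s ∈ Icc a b, HasDerivAt w (w' s) s) (hw' : ContinuousOn w' (Icc a b)) {z : ℝ}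
    (hz : z ∈ Icc a b) :
    |w z - ⨍ t in Ioo a b, w t| ≤ √(b - a) * √(∫ s in Ioo a b, w' s ^ 2) := by
  obtain ⟨c, hc, hwc⟩ := exists_mem_Ioo_setAverage_eq hab
    (fun s hs => (hw s hs).continuousAt.continuousWithinAt)
  rw [hwc]
  calc |w z - w c| ≤ ∫ s in Ioo a b, |w' s| :=
        abs_sub_le_integral_abs_deriv hw hw'.integrableOn_Icc (Ioo_subset_Icc_self hc) hz
    _ ≤ _ := integral_abs_le_sqrt_mul_sqrt_integral_sq hab.le
        ((memLp_two_iff_integrable_sq ((hw'.mono Ioo_subset_Icc_self).aestronglyMeasurable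
          measurableSet_Ioo)).2 ((hw'.pow 2).integrableOn_Icc.mono_set Ioo_subset_Icc_self))

end OneDimensional

section Cylinder

variable {d : ℕ}

theorem hasDerivAt_snoc (x' : Fin d → ℝ) (t : ℝ) :
    HasDerivAt (fun s : ℝ => (Fin.snoc x' s : Fin (d + 1) → ℝ)) (Pi.single (Fin.last d) 1) t := by
  refine hasDerivAt_pi.2 fun i => Fin.lastCases ?_ (fun j => ?_) i
  · simp only [Fin.snoc_last, Pi.single_eq_same]
    exact hasDerivAt_id' t
  · simpa [Pi.single_apply, (Fin.castSucc_lt_last j).ne] using hasDerivAt_const t (x' j)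

theorem DifferentiableAt.hasDerivAt_comp_snoc {v : (Fin (d + 1) → ℝ) → ℝ} {x' : Fin d → ℝ} {t : ℝ}
    (hv : DifferentiableAt ℝ v (Fin.snoc x' t)) :
    HasDerivAt (fun s => v (Fin.snoc x' s)) (pd v (Fin.last d) (Fin.snoc x' t)) t :=
  hv.hasFDerivAt.comp_hasDerivAt t (hasDerivAt_snoc x' t)

theorem ContDiff.continuous_pd {n : ℕ} {f : (Fin n → ℝ) → ℝ} (hf : ContDiff ℝ 1 f) (i : Fin n) :
    Continuous (pd f i) :=
  (hf.continuous_fderiv one_ne_zero).clm_apply continuous_const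

theorem abs_sub_integral_snoc_le {v : (Fin (d + 1) → ℝ) → ℝ} (hv : ContDiff ℝ 1 v) (x' : Fin d → ℝ)
    {z : ℝ} (hz : z ∈ Set.Icc (-(1:ℝ)/2) (1/2)) :
    |v (Fin.snoc x' z) - ∫ t in Set.Ioo (-(1:ℝ)/2) (1/2), v (Fin.snoc x' t)|
      ≤ √(∫ t in Set.Ioo (-(1:ℝ)/2) (1/2), pd v (Fin.last d) (Fin.snoc x' t) ^ 2) := by
  have h := abs_sub_setAverage_le_sqrt_mul_sqrt (w := fun s => v (Fin.snoc x' s)) (by norm_num)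
    (fun t _ => (hv.differentiable one_ne_zero _).hasDerivAt_comp_snoc)
    ((hv.continuous_pd _).comp (continuous_const.finSnoc continuous_id)).continuousOn hz
  have hlen : (1 / 2 : ℝ) - -1 / 2 = 1 := by norm_num
  simpa only [setAverage_eq, measureReal_def, Real.volume_Ioo, hlen, ENNReal.ofReal_one,
    ENNReal.toReal_one, inv_one, one_smul, Real.sqrt_one, one_mul] using h

theorem measurePreserving_snoc_restrict_cyl (ω : Set (Fin d → ℝ)) :
    MeasurePreserving (fun p : (Fin d → ℝ) × ℝ => (Fin.snoc p.1 p.2 : Fin (d + 1) → ℝ))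
      ((volume.restrict ω).prod (volume.restrict (Set.Ioo (-(1:ℝ)/2) (1/2))))
      (volume.restrict (cyl ω)) := by
  set e : (Fin d → ℝ) × ℝ ≃ᵐ (Fin (d + 1) → ℝ) :=
    MeasurableEquiv.prodComm.trans (MeasurableEquiv.piFinSuccAbove (fun _ => ℝ) (Fin.last d)).symm
  have he : ⇑e = fun p => Fin.snoc p.1 p.2 := by
    ext p
    simp [e, MeasurableEquiv.piFinSuccAbove, MeasurableEquiv.prodComm]
  have hmp : MeasurePreserving e (volume.prod volume) volume :=
    Measure.measurePreserving_swap.trans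
      (volume_preserving_piFinSuccAbove (fun _ => ℝ) (Fin.last d)).symm
  have hpre : e ⁻¹' cyl ω = ω ×ˢ Set.Ioo (-(1:ℝ)/2) (1/2) := by
    ext p
    simp [he, cyl, Fin.snoc_castSucc]
  rw [← he, Measure.prod_restrict, ← hpre]
  exact hmp.restrict_preimage_emb e.measurableEmbedding _

variable {ω : Set (Fin d → ℝ)} {f : (Fin (d + 1) → ℝ) → ℝ}

theorem integrable_snoc_prod_of_integrableOn_cyl (hf : IntegrableOn f (cyl ω)) :
    Integrable (fun p : (Fin d → ℝ) × ℝ => f (Fin.snoc p.1 p.2))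
      ((volume.restrict ω).prod (volume.restrict (Set.Ioo (-(1:ℝ)/2) (1/2)))) :=
  (measurePreserving_snoc_restrict_cyl ω).integrable_comp_of_integrable hf

theorem integrable_integral_snoc_of_integrableOn_cyl (hf : IntegrableOn f (cyl ω)) :
    Integrable (fun x' => ∫ t in Set.Ioo (-(1:ℝ)/2) (1/2), f (Fin.snoc x' t))
      (volume.restrict ω) :=
  (integrable_snoc_prod_of_integrableOn_cyl hf).integral_prod_left

theorem setIntegral_cyl_eq_integral_integral_snoc (hf : IntegrableOn f (cyl ω)) :
    ∫ x in cyl ω, f x = ∫ x' in ω, ∫ t in Set.Ioo (-(1:ℝ)/2) (1/2), f (Fin.snoc x' t) := by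
  have hmp := measurePreserving_snoc_restrict_cyl ω
  rw [← integral_prod _ (integrable_snoc_prod_of_integrableOn_cyl hf), ← hmp.map_eq,
    integral_map hmp.measurable.aemeasurable (hmp.map_eq ▸ hf.aestronglyMeasurable)]

end Cylinder

section ScaledGradient

variable {d : ℕ} {ε : ℝ} {v : (Fin (d + 1) → ℝ) → ℝ}

theorem sq_pd_last_le_mul_gradEpsSq (hε : ε ≠ 0) (x : Fin (d + 1) → ℝ) :
    pd v (Fin.last d) x ^ 2 ≤ ε ^ 2 * gradEpsSq ε v x := by
  have hsum : 0 ≤ ∑ α : Fin d, pd v α.castSucc x ^ 2 := by positivity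
  calc pd v (Fin.last d) x ^ 2 = ε ^ 2 * (ε⁻¹ ^ 2 * pd v (Fin.last d) x ^ 2) := by field_simp
    _ ≤ ε ^ 2 * gradEpsSq ε v x := by
        unfold gradEpsSq
        gcongr
        linarith

theorem sqrt_integral_sq_pd_last_le {s : Set (Fin (d + 1) → ℝ)} (hε : 0 < ε)
    (hvg : IntegrableOn (gradEpsSq ε v) s) :
    √(∫ x in s, pd v (Fin.last d) x ^ 2) ≤ ε * √(∫ x in s, gradEpsSq ε v x) := by
  calc √(∫ x in s, pd v (Fin.last d) x ^ 2) ≤ √(∫ x in s, ε ^ 2 * gradEpsSq ε v x) :=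
        Real.sqrt_le_sqrt (integral_mono_of_nonneg (.of_forall fun _ => sq_nonneg _)
          (hvg.const_mul _) (.of_forall (sq_pd_last_le_mul_gradEpsSq hε.ne')))
    _ = ε * √(∫ x in s, gradEpsSq ε v x) := by
        rw [integral_const_mul, Real.sqrt_mul (sq_nonneg ε), Real.sqrt_sq hε.le]

theorem integrableOn_sq_pd_last (hv : ContDiff ℝ 1 v) (hε : ε ≠ 0)
    {s : Set (Fin (d + 1) → ℝ)} (hvg : IntegrableOn (gradEpsSq ε v) s) :
    IntegrableOn (fun x => pd v (Fin.last d) x ^ 2) s :=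
  (hvg.const_mul (ε ^ 2)).mono' ((hv.continuous_pd _).pow 2).aestronglyMeasurable
    (.of_forall fun x => by
      rw [Real.norm_of_nonneg (sq_nonneg _)]
      exact sq_pd_last_le_mul_gradEpsSq hε x)

end ScaledGradient

theorem statement0_general
    (d : ℕ) (ω : Set (Fin d → ℝ))
    (ε : ℝ) (hε0 : 0 < ε)
    (h : (Fin d → ℝ) → ℝ) (v : (Fin (d + 1) → ℝ) → ℝ)
    (hv : ContDiff ℝ 1 v)
    (hh : Integrable (fun x' => (h x') ^ 2) (volume.restrict ω))
    (hvg : Integrable (gradEpsSq ε v) (volume.restrict (cyl ω)))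
    (z : ℝ) (hz : z ∈ Set.Icc (-(1:ℝ)/2) (1/2)) :
    |∫ x' in ω,
        (v (Fin.snoc x' z) - ∫ t in Set.Ioo (-(1:ℝ)/2) (1/2), v (Fin.snoc x' t)) * h x'|
      ≤ ε * Real.sqrt (∫ x' in ω, (h x') ^ 2)
          * Real.sqrt (∫ x in cyl ω, gradEpsSq ε v x) := by
  have hD2 : IntegrableOn (fun x => pd v (Fin.last d) x ^ 2) (cyl ω) :=
    integrableOn_sq_pd_last hv hε0.ne' hvg
  calc _ ≤ √(∫ x' in ω, √(∫ t in Set.Ioo (-(1:ℝ)/2) (1/2),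
              pd v (Fin.last d) (Fin.snoc x' t) ^ 2) ^ 2) * √(∫ x' in ω, √(h x' ^ 2) ^ 2) :=
        abs_integral_mul_le_sqrt_mul_sqrt
          (memLp_two_sqrt (integrable_integral_snoc_of_integrableOn_cyl hD2)
            (.of_forall fun _ => by positivity))
          (memLp_two_sqrt hh (.of_forall fun _ => sq_nonneg _))
          (.of_forall fun x' => abs_sub_integral_snoc_le hv x' hz)
          (.of_forall fun x' => (Real.sqrt_sq_eq_abs _).ge)
    _ = √(∫ x in cyl ω, pd v (Fin.last d) x ^ 2) * √(∫ x' in ω, h x' ^ 2) := by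
        simp only [Real.sq_sqrt (sq_nonneg _), Real.sq_sqrt (integral_nonneg fun _ => sq_nonneg _),
          setIntegral_cyl_eq_integral_integral_snoc hD2]
    _ ≤ ε * √(∫ x in cyl ω, gradEpsSq ε v x) * √(∫ x' in ω, h x' ^ 2) := by
        gcongr
        exact sqrt_integral_sq_pd_last_le hε0 hvg
    _ = _ := by ring

/-- Poincaré–Wirtinger estimate in the thin direction:
`|∫_ω (v(·,z) - m(v)) h| ≤ ε ‖h‖_{L²(ω)} ‖∇^ε v‖_{L²(Ω)}`. -/
theorem statement0
    (d : ℕ) (ω : Set (Fin d → ℝ))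
    (hω_bdd : Bornology.IsBounded ω) (hω_meas : MeasurableSet ω)
    (ε : ℝ) (hε0 : 0 < ε) (hε1 : ε ≤ 1)
    (h : (Fin d → ℝ) → ℝ) (v : (Fin (d + 1) → ℝ) → ℝ)
    (hv : ContDiff ℝ 1 v)
    (hh : Integrable (fun x' => (h x') ^ 2) (volume.restrict ω))
    (hv2 : Integrable (fun x => (v x) ^ 2) (volume.restrict (cyl ω)))
    (hvg : Integrable (gradEpsSq ε v) (volume.restrict (cyl ω)))
    (z : ℝ) (hz : z ∈ Set.Icc (-(1:ℝ)/2) (1/2)) :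
    |∫ x' in ω,
        (v (Fin.snoc x' z) - ∫ t in Set.Ioo (-(1:ℝ)/2) (1/2), v (Fin.snoc x' t)) * h x'|
      ≤ ε * Real.sqrt (∫ x' in ω, (h x') ^ 2)
          * Real.sqrt (∫ x in cyl ω, gradEpsSq ε v x) :=
  statement0_general d ω ε hε0 h v hv hh hvg z hz
end
end

section
/- Let Ω = ω × (-1/2,1/2), 0 < ε ≤ 1, and let h ∈ L²(ω) and v ∈ (H¹(Ω))^d. Define the scaled symmetric strain e^ε by e^ε_{αβ}(v) = e_{αβ}(v), e^ε_{αd}(v) = ε^{-1}e_{αd}(v), e^ε_{dd}(v) = ε^{-2}e_{dd}(v). Then for any z ∈ [-1/2,1/2], |∫_ω (v_d(·,z) − m(v_d)) h| ≤ ε² ‖h‖_{L²(ω)} ‖e^ε(v)‖_{L²(Ω)}, where m(v_d)(x') = ∫_{-1/2}^{1/2} v_d(x',t) dt. -/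
open MeasureTheory Real

noncomputable section

/-- Symmetric gradient (strain) of a vector field. -/
def strain {d : ℕ} (u : (Fin (d + 1) → ℝ) → (Fin (d + 1) → ℝ)) (x : Fin (d + 1) → ℝ)
    (i j : Fin (d + 1)) : ℝ :=
  (pd (fun y => u y i) j x + pd (fun y => u y j) i x) / 2

/-- Scaling factors of the scaled strain `e^ε`: `1`, `ε⁻¹` or `ε⁻²` according to the number
of vertical indices. -/
def escale {d : ℕ} (ε : ℝ) (i j : Fin (d + 1)) : ℝ :=
  if i = Fin.last d then (if j = Fin.last d then ε⁻¹ ^ 2 else ε⁻¹)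
  else (if j = Fin.last d then ε⁻¹ else 1)

/-- Squared pointwise (Frobenius) norm of the scaled strain `e^ε(u)`. -/
def strainEpsSq {d : ℕ} (ε : ℝ) (u : (Fin (d + 1) → ℝ) → (Fin (d + 1) → ℝ))
    (x : Fin (d + 1) → ℝ) : ℝ :=
  ∑ i : Fin (d + 1), ∑ j : Fin (d + 1), (escale ε i j * strain u x i j) ^ 2

/-!
Along each vertical fibre `∂_d v_d = e_dd(v)`. By the mean value theorem for integrals the vertical
average `m(v_d)(x')` is attained at some height `c`, so `|v_d(x', z) - m(v_d)(x')| ≤ ∫ |e_dd(v)(x', t)| dt`.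
Integrating against `|h|` and applying Cauchy–Schwarz on `ω × (-1/2, 1/2)`, whose vertical factor has
length one, bounds the left-hand side by `‖h‖ ‖e_dd(v)‖`; finally `e_dd(v) = ε² e^ε_dd(v)`.
-/

open Set
open scoped Interval

theorem abs_sub_setAverage_le_integral_abs_deriv {f f' : ℝ → ℝ} {a b z : ℝ} (hab : a < b)
    (hz : z ∈ Icc a b) (hf : ∀ t ∈ Icc a b, HasDerivAt f (f' t) t)
    (hf' : IntegrableOn f' (Icc a b)) :
    |f z - ⨍ t in Ioo a b, f t| ≤ ∫ t in Ioo a b, |f' t| := by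
  have hfc : ContinuousOn f (Icc a b) := fun t ht => (hf t ht).continuousAt.continuousWithinAt
  obtain ⟨c, hc, hc_avg⟩ := exists_eq_setAverage (μ := volume) (isConnected_Ioo hab)
    (hfc.mono Ioo_subset_Icc_self) (hfc.integrableOn_Icc.mono_set Ioo_subset_Icc_self)
    measure_Ioo_lt_top.ne (by simp [hab])
  have hcz : uIcc c z ⊆ Icc a b := uIcc_subset_Icc (Ioo_subset_Icc_self hc) hz
  rw [← hc_avg, ← intervalIntegral.integral_eq_sub_of_hasDerivAt (fun t ht => hf t (hcz ht))
    ((hf'.mono_set hcz).intervalIntegrable)]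
  calc |∫ t in c..z, f' t| ≤ ∫ t in Ι c z, |f' t| := by
        simpa only [Real.norm_eq_abs] using
          intervalIntegral.norm_integral_le_integral_norm_uIoc (f := f') (μ := volume)
    _ ≤ ∫ t in Ioc a b, |f' t| :=
        setIntegral_mono_set (hf'.mono_set Ioc_subset_Icc_self).abs
          (ae_of_all _ fun _ => abs_nonneg _)
          (Ioc_subset_Ioc (le_min hc.1.le hz.1) (max_le hc.2.le hz.2)).eventuallyLE
    _ = ∫ t in Ioo a b, |f' t| := integral_Ioc_eq_integral_Ioo

theorem hasDerivAt_comp_finSnoc {n : ℕ} {g : (Fin (n + 1) → ℝ) → ℝ} (x' : Fin n → ℝ) (t : ℝ)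
    (hg : DifferentiableAt ℝ g (Fin.snoc x' t)) :
    HasDerivAt (fun s => g (Fin.snoc x' s)) (pd g (Fin.last n) (Fin.snoc x' t)) t := by
  have hline : HasDerivAt (fun s => (Fin.snoc x' s : Fin (n + 1) → ℝ))
      (Pi.single (Fin.last n) 1) t := by
    have hupd : Function.update (Fin.snoc x' t : Fin (n + 1) → ℝ) (Fin.last n)
        = fun s => (Fin.snoc x' s : Fin (n + 1) → ℝ) :=
      funext fun _ => Fin.update_snoc_last _ _ _
    exact hupd ▸ hasDerivAt_update (Fin.snoc x' t) (Fin.last n) t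
  exact hg.hasFDerivAt.comp_hasDerivAt t hline

theorem strain_last_last {d : ℕ} (u : (Fin (d + 1) → ℝ) → (Fin (d + 1) → ℝ))
    (x : Fin (d + 1) → ℝ) :
    strain u x (Fin.last d) (Fin.last d) = pd (fun y => u y (Fin.last d)) (Fin.last d) x :=
  add_self_div_two _

theorem continuous_strain {d : ℕ} {u : (Fin (d + 1) → ℝ) → (Fin (d + 1) → ℝ)}
    (hu : ContDiff ℝ 1 u) (i j : Fin (d + 1)) : Continuous fun x => strain u x i j := by
  have hpd : ∀ i j : Fin (d + 1), Continuous fun x => pd (fun y => u y i) j x := fun i j =>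
    ((contDiff_apply ℝ ℝ i).comp hu |>.continuous_fderiv one_ne_zero).clm_apply continuous_const
  exact ((hpd i j).add (hpd j i)).div_const 2

theorem sq_strain_last_last_le {d : ℕ} {ε : ℝ} (hε : ε ≠ 0)
    (u : (Fin (d + 1) → ℝ) → (Fin (d + 1) → ℝ)) (x : Fin (d + 1) → ℝ) :
    strain u x (Fin.last d) (Fin.last d) ^ 2 ≤ (ε ^ 2) ^ 2 * strainEpsSq ε u x := by
  have hlast : (escale ε (Fin.last d) (Fin.last d) * strain u x (Fin.last d) (Fin.last d)) ^ 2
      ≤ strainEpsSq ε u x :=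
    (Finset.single_le_sum (f := fun j => (escale ε (Fin.last d) j * strain u x _ j) ^ 2)
      (fun _ _ => sq_nonneg _) (Finset.mem_univ _)).trans
    (Finset.single_le_sum (f := fun i => ∑ j, (escale ε i j * strain u x i j) ^ 2)
      (fun _ _ => Finset.sum_nonneg fun _ _ => sq_nonneg _) (Finset.mem_univ (Fin.last d)))
  calc strain u x (Fin.last d) (Fin.last d) ^ 2
      = (ε ^ 2) ^ 2 * (escale ε (Fin.last d) (Fin.last d) * strain u x _ _) ^ 2 := by
        simp only [escale, if_true]; field_simp
    _ ≤ (ε ^ 2) ^ 2 * strainEpsSq ε u x := by gcongr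

theorem integral_abs_mul_abs_le_sqrt_mul_sqrt {α : Type*} [MeasurableSpace α] {μ : Measure α}
    {f g : α → ℝ} (hf : MemLp f 2 μ) (hg : MemLp g 2 μ) :
    ∫ a, |f a| * |g a| ∂μ ≤ √(∫ a, f a ^ 2 ∂μ) * √(∫ a, g a ^ 2 ∂μ) := by
  have h := integral_mul_norm_le_Lp_mul_Lq (μ := μ) Real.HolderConjugate.two_two
    (by simpa using hf) (by simpa using hg)
  simpa only [Real.norm_eq_abs, Real.rpow_two, sq_abs, ← Real.sqrt_eq_rpow] using h

section Cylinder

variable {d : ℕ}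

theorem finSnoc_eq_piFinSuccAbove_symm :
    (fun p : (Fin d → ℝ) × ℝ => (Fin.snoc p.1 p.2 : Fin (d + 1) → ℝ))
      = MeasurableEquiv.prodComm.trans
          (MeasurableEquiv.piFinSuccAbove (fun _ => ℝ) (Fin.last d)).symm := by
  ext p : 1
  simp [MeasurableEquiv.piFinSuccAbove_symm_apply, Fin.insertNthEquiv, Fin.insertNth_last',
    MeasurableEquiv.prodComm]

theorem measurePreserving_finSnoc :
    MeasurePreserving (fun p : (Fin d → ℝ) × ℝ => (Fin.snoc p.1 p.2 : Fin (d + 1) → ℝ)) := by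
  rw [finSnoc_eq_piFinSuccAbove_symm]
  exact (volume_preserving_piFinSuccAbove (fun _ => ℝ) (Fin.last d)).symm.comp
    Measure.measurePreserving_swap

theorem measurableEmbedding_finSnoc :
    MeasurableEmbedding (fun p : (Fin d → ℝ) × ℝ => (Fin.snoc p.1 p.2 : Fin (d + 1) → ℝ)) := by
  rw [finSnoc_eq_piFinSuccAbove_symm]
  exact MeasurableEquiv.measurableEmbedding _

theorem measurePreserving_finSnoc_cyl (ω : Set (Fin d → ℝ)) :
    MeasurePreserving (fun p : (Fin d → ℝ) × ℝ => (Fin.snoc p.1 p.2 : Fin (d + 1) → ℝ))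
      ((volume.restrict ω).prod (volume.restrict (Ioo (-(1:ℝ)/2) (1/2))))
      (volume.restrict (cyl ω)) := by
  have hpre : (fun p : (Fin d → ℝ) × ℝ => (Fin.snoc p.1 p.2 : Fin (d + 1) → ℝ)) ⁻¹' cyl ω
      = ω ×ˢ Ioo (-(1:ℝ)/2) (1/2) := by
    ext p
    simp [cyl]
  rw [Measure.prod_restrict, ← Measure.volume_eq_prod, ← hpre]
  exact measurePreserving_finSnoc.restrict_preimage_emb measurableEmbedding_finSnoc _

end Cylinder

instance : IsProbabilityMeasure (volume.restrict (Ioo (-(1:ℝ)/2) (1/2))) :=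
  ⟨by rw [Measure.restrict_apply_univ, Real.volume_Ioo]; norm_num⟩

section CylinderCauchySchwarz

variable {d : ℕ} {ω : Set (Fin d → ℝ)} {g : (Fin (d + 1) → ℝ) → ℝ} {h : (Fin d → ℝ) → ℝ}

theorem integrable_abs_finSnoc_mul_abs (hg : MemLp g 2 (volume.restrict (cyl ω)))
    (hh : MemLp h 2 (volume.restrict ω)) :
    Integrable (fun p : (Fin d → ℝ) × ℝ => |g (Fin.snoc p.1 p.2)| * |h p.1|)
      ((volume.restrict ω).prod (volume.restrict (Ioo (-(1:ℝ)/2) (1/2)))) :=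
  ((hg.comp_measurePreserving (measurePreserving_finSnoc_cyl ω)).norm.integrable_mul
    (hh.comp_measurePreserving measurePreserving_fst).norm :)

theorem integrable_integral_abs_finSnoc_mul_abs (hg : MemLp g 2 (volume.restrict (cyl ω)))
    (hh : MemLp h 2 (volume.restrict ω)) :
    Integrable (fun x' => (∫ t in Ioo (-(1:ℝ)/2) (1/2), |g (Fin.snoc x' t)|) * |h x'|)
      (volume.restrict ω) := by
  simpa only [← integral_mul_const] using
    (integrable_abs_finSnoc_mul_abs hg hh).integral_prod_left

theorem integral_integral_abs_finSnoc_mul_abs_le (hg : MemLp g 2 (volume.restrict (cyl ω)))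
    (hh : MemLp h 2 (volume.restrict ω)) :
    ∫ x' in ω, (∫ t in Ioo (-(1:ℝ)/2) (1/2), |g (Fin.snoc x' t)|) * |h x'|
      ≤ √(∫ x in cyl ω, g x ^ 2) * √(∫ x' in ω, h x' ^ 2) := by
  set μ := (volume.restrict ω).prod (volume.restrict (Ioo (-(1:ℝ)/2) (1/2)))
  have hg_sq : ∫ p, g (Fin.snoc p.1 p.2) ^ 2 ∂μ = ∫ x in cyl ω, g x ^ 2 :=
    (measurePreserving_finSnoc_cyl ω).integral_comp measurableEmbedding_finSnoc (g · ^ 2)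
  have hh_sq : ∫ p, h p.1 ^ 2 ∂μ = ∫ x' in ω, h x' ^ 2 := by
    rw [integral_fun_fst (fun x' => h x' ^ 2), probReal_univ, one_smul]
  calc ∫ x' in ω, (∫ t in Ioo (-(1:ℝ)/2) (1/2), |g (Fin.snoc x' t)|) * |h x'|
      = ∫ p, |g (Fin.snoc p.1 p.2)| * |h p.1| ∂μ := by
        simp only [← integral_mul_const]
        exact (integral_prod _ (integrable_abs_finSnoc_mul_abs hg hh)).symm
    _ ≤ √(∫ p, g (Fin.snoc p.1 p.2) ^ 2 ∂μ) * √(∫ p, h p.1 ^ 2 ∂μ) :=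
        integral_abs_mul_abs_le_sqrt_mul_sqrt
          (hg.comp_measurePreserving (measurePreserving_finSnoc_cyl ω))
          (hh.comp_measurePreserving measurePreserving_fst)
    _ = √(∫ x in cyl ω, g x ^ 2) * √(∫ x' in ω, h x' ^ 2) := by rw [hg_sq, hh_sq]

end CylinderCauchySchwarz

theorem abs_sub_integral_vertical_le {d : ℕ} {u : (Fin (d + 1) → ℝ) → (Fin (d + 1) → ℝ)}
    (hu : ContDiff ℝ 1 u) (x' : Fin d → ℝ) {z : ℝ} (hz : z ∈ Icc (-(1:ℝ)/2) (1/2)) :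
    |u (Fin.snoc x' z) (Fin.last d) - ∫ t in Ioo (-(1:ℝ)/2) (1/2), u (Fin.snoc x' t) (Fin.last d)|
      ≤ ∫ t in Ioo (-(1:ℝ)/2) (1/2), |strain u (Fin.snoc x' t) (Fin.last d) (Fin.last d)| := by
  have hderiv : ∀ t, HasDerivAt (fun s => u (Fin.snoc x' s) (Fin.last d))
      (strain u (Fin.snoc x' t) (Fin.last d) (Fin.last d)) t := fun t => by
    rw [strain_last_last]
    exact hasDerivAt_comp_finSnoc x' t
      (((contDiff_apply ℝ ℝ (Fin.last d)).comp hu).differentiable one_ne_zero _)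
  have hcont : Continuous fun t => strain u (Fin.snoc x' t) (Fin.last d) (Fin.last d) :=
    (continuous_strain hu _ _).comp (continuous_const.finSnoc continuous_id)
  have havg := abs_sub_setAverage_le_integral_abs_deriv (by norm_num) hz
    (fun t _ => hderiv t) hcont.integrableOn_Icc
  have hlength : max ((1:ℝ)/2 - -1/2) 0 = 1 := by norm_num
  rwa [setAverage_eq, Real.volume_real_Ioo, hlength, inv_one, one_smul] at havg

theorem memLp_strain_last_last {d : ℕ} {ε : ℝ} (hε : ε ≠ 0)
    {u : (Fin (d + 1) → ℝ) → (Fin (d + 1) → ℝ)} (hu : ContDiff ℝ 1 u)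
    {μ : Measure (Fin (d + 1) → ℝ)} (hstr : Integrable (strainEpsSq ε u) μ) :
    MemLp (fun x => strain u x (Fin.last d) (Fin.last d)) 2 μ := by
  have hcont := continuous_strain hu (Fin.last d) (Fin.last d)
  refine (memLp_two_iff_integrable_sq hcont.aestronglyMeasurable).2 <|
    (hstr.const_mul ((ε ^ 2) ^ 2)).mono' (hcont.pow 2).aestronglyMeasurable
      (ae_of_all _ fun x => ?_)
  rw [Real.norm_of_nonneg (sq_nonneg _)]
  exact sq_strain_last_last_le hε u x

theorem statement9_general
    (d : ℕ) (ω : Set (Fin d → ℝ))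
    (ε : ℝ) (hε0 : 0 < ε)
    (h : (Fin d → ℝ) → ℝ) (v : (Fin (d + 1) → ℝ) → (Fin (d + 1) → ℝ))
    (hv : ContDiff ℝ 1 v)
    (hh : Integrable (fun x' => (h x') ^ 2) (volume.restrict ω))
    (hstr : Integrable (fun x => strainEpsSq ε v x) (volume.restrict (cyl ω)))
    (z : ℝ) (hz : z ∈ Set.Icc (-(1:ℝ)/2) (1/2)) :
    |∫ x' in ω,
        (v (Fin.snoc x' z) (Fin.last d)
          - ∫ t in Set.Ioo (-(1:ℝ)/2) (1/2), v (Fin.snoc x' t) (Fin.last d)) * h x'|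
      ≤ ε ^ 2 * Real.sqrt (∫ x' in ω, (h x') ^ 2)
          * Real.sqrt (∫ x in cyl ω, strainEpsSq ε v x) := by
  set e : (Fin (d + 1) → ℝ) → ℝ := fun x => strain v x (Fin.last d) (Fin.last d)
  have he : MemLp e 2 (volume.restrict (cyl ω)) := memLp_strain_last_last hε0.ne' hv hstr
  have habs_h : MemLp (fun x' => |h x'|) 2 (volume.restrict ω) := by
    refine (memLp_two_iff_integrable_sq ?_).2 (by simpa only [sq_abs] using hh)
    simpa only [Function.comp_def, Real.sqrt_sq_eq_abs] using
      Real.continuous_sqrt.comp_aestronglyMeasurable hh.aestronglyMeasurable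
  have hsq_e : ∫ x in cyl ω, e x ^ 2 ≤ (ε ^ 2) ^ 2 * ∫ x in cyl ω, strainEpsSq ε v x := by
    rw [← integral_const_mul]
    exact integral_mono he.integrable_sq (hstr.const_mul _) (sq_strain_last_last_le hε0.ne' v)
  calc _ ≤ ∫ x' in ω, |v (Fin.snoc x' z) (Fin.last d)
            - ∫ t in Ioo (-(1:ℝ)/2) (1/2), v (Fin.snoc x' t) (Fin.last d)| * |h x'| :=
        abs_integral_le_integral_abs.trans_eq (by simp only [abs_mul])
    _ ≤ ∫ x' in ω, (∫ t in Ioo (-(1:ℝ)/2) (1/2), |e (Fin.snoc x' t)|) * |h x'| := by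
        refine integral_mono_of_nonneg (ae_of_all _ fun _ => by positivity)
          (by simpa only [abs_abs] using integrable_integral_abs_finSnoc_mul_abs he habs_h)
          (ae_of_all _ fun x' => ?_)
        exact mul_le_mul_of_nonneg_right (abs_sub_integral_vertical_le hv x' hz) (abs_nonneg _)
    _ ≤ √(∫ x in cyl ω, e x ^ 2) * √(∫ x' in ω, h x' ^ 2) := by
        simpa only [abs_abs, sq_abs] using integral_integral_abs_finSnoc_mul_abs_le he habs_h
    _ ≤ √((ε ^ 2) ^ 2 * ∫ x in cyl ω, strainEpsSq ε v x) * √(∫ x' in ω, h x' ^ 2) := by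
        gcongr
    _ = ε ^ 2 * √(∫ x' in ω, h x' ^ 2) * √(∫ x in cyl ω, strainEpsSq ε v x) := by
        rw [Real.sqrt_mul (by positivity), Real.sqrt_sq (by positivity)]
        ring

/-- Thin-plate Poincaré–Wirtinger estimate for the vertical component:
`|∫_ω (v_d(·,z) − m(v_d)) h| ≤ ε² ‖h‖_{L²(ω)} ‖e^ε(v)‖_{L²(Ω)}`. -/
theorem statement9
    (d : ℕ) (ω : Set (Fin d → ℝ))
    (hω_bdd : Bornology.IsBounded ω) (hω_meas : MeasurableSet ω)
    (ε : ℝ) (hε0 : 0 < ε) (hε1 : ε ≤ 1)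
    (h : (Fin d → ℝ) → ℝ) (v : (Fin (d + 1) → ℝ) → (Fin (d + 1) → ℝ))
    (hv : ContDiff ℝ 1 v)
    (hh : Integrable (fun x' => (h x') ^ 2) (volume.restrict ω))
    (hstr : Integrable (fun x => strainEpsSq ε v x) (volume.restrict (cyl ω)))
    (z : ℝ) (hz : z ∈ Set.Icc (-(1:ℝ)/2) (1/2)) :
    |∫ x' in ω,
        (v (Fin.snoc x' z) (Fin.last d)
          - ∫ t in Set.Ioo (-(1:ℝ)/2) (1/2), v (Fin.snoc x' t) (Fin.last d)) * h x'|
      ≤ ε ^ 2 * Real.sqrt (∫ x' in ω, (h x') ^ 2)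
          * Real.sqrt (∫ x in cyl ω, strainEpsSq ε v x) :=
  statement9_general d ω ε hε0 h v hv hh hstr z hz
end
end
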